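/- arXiv:2101.02200 — 2 statements merged into one kernel-verified Lean document; each statement's English description precedes it below -/
import Mathlib

section
/- In Z^3, the capacity of the discrete line segment T_N = {0,1,...,N} × {0}^2 satisfies cap(T_N) ~ (π/3) · N / log N as N → ∞; that is, cap(T_N) · (log N)/N converges to π/3. -/
/-!
Restricted to the segment, `G` is the kernel `g |i - j|` on `{0, …, N}` with `k g k → c = 3/(2π)`,
so the partial sums `S n = g 1 + ⋯ + g n` grow like `c log n`, and the potential of the uniform
measure at `i` is `g 0 + S i + S (N - i)`.

Summing the last-exit identity over the segment gives `N + 1 = ∑ⱼ eⱼ (g 0 + S j + S (N - j))`,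
hence `cap(T_N) ≥ (N + 1) / (g 0 + 2 S N) ≈ N / (2c log N)`.

Conversely, since the kernel is symmetric, `cap(T_N) ≤ μ(T_N)` for every `μ` whose potential is at
least `1` on `T_N`. The uniform measure has potential `≈ 2c log N` in the bulk but only `≈ c log N`
near the endpoints. Doubling its density on the two end pieces of length `L = N / 2k` gives potential
at least `2 S (L / 2) ≈ 2c log N` everywhere, while multiplying the mass by at most `1 + 1/k`.
So `cap(T_N) ≤ (1 + 1/k) N / (2c log N) (1 + o(1))` for every `k`.
-/

open scoped BigOperators

abbrev Zd (d : ℕ) := Fin d → ℤ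

noncomputable def enorm3 (x : Zd 3) : ℝ := Real.sqrt (∑ i, ((x i : ℝ)) ^ 2)

def segN (N : ℕ) : Finset (Zd 3) :=
  (Finset.range (N + 1)).image (fun i : ℕ => fun j : Fin 3 => if (j : ℕ) = 0 then (i : ℤ) else 0)

open Finset Filter Topology

theorem tendsto_of_forall_eventually_le {α ι β : Type*} [TopologicalSpace β] [LinearOrder β]
    [OrderTopology β] {l : Filter α} {p : Filter ι} [p.NeBot] {a lo : α → β} {u : ι → α → β}
    {y : ι → β} {x : β} (hlo : Tendsto lo l (𝓝 x)) (hloa : ∀ᶠ n in l, lo n ≤ a n)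
    (hy : Tendsto y p (𝓝 x)) (hu : ∀ᶠ k in p, Tendsto (u k) l (𝓝 (y k)))
    (hau : ∀ᶠ k in p, ∀ᶠ n in l, a n ≤ u k n) : Tendsto a l (𝓝 x) := by
  refine tendsto_order.2 ⟨fun b hb => ?_, fun b hb => ?_⟩
  · filter_upwards [(tendsto_order.1 hlo).1 b hb, hloa] with n h1 h2 using h1.trans_le h2
  · obtain ⟨k, hyk, huk, hauk⟩ := (((tendsto_order.1 hy).2 b hb).and (hu.and hau)).exists
    filter_upwards [(tendsto_order.1 huk).2 b hyk, hauk] with n h1 h2 using h2.trans_lt h1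

namespace SegmentCapacity

section CapacityBounds

variable {α : Type*} {s : Finset α} {K : α → α → ℝ} {e : α → ℝ}

theorem card_le_sum_mul_of_sum_kernel_le (he : ∀ y ∈ s, 0 ≤ e y)
    (hK : ∀ x ∈ s, ∑ y ∈ s, K x y * e y = 1) {M : ℝ} (hM : ∀ y ∈ s, ∑ x ∈ s, K x y ≤ M) :
    (#s : ℝ) ≤ (∑ y ∈ s, e y) * M :=
  calc (#s : ℝ) = ∑ x ∈ s, ∑ y ∈ s, K x y * e y := by
        rw [sum_congr rfl hK, sum_const, nsmul_one]
    _ = ∑ y ∈ s, (∑ x ∈ s, K x y) * e y := by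
        rw [sum_comm]; simp_rw [sum_mul]
    _ ≤ ∑ y ∈ s, M * e y :=
        sum_le_sum fun y hy => mul_le_mul_of_nonneg_right (hM y hy) (he y hy)
    _ = (∑ y ∈ s, e y) * M := by rw [← mul_sum, mul_comm]

theorem sum_le_sum_of_one_le_potential (hKsymm : ∀ x ∈ s, ∀ y ∈ s, K x y = K y x)
    (he : ∀ y ∈ s, 0 ≤ e y) (hK : ∀ x ∈ s, ∑ y ∈ s, K x y * e y = 1) {μ : α → ℝ}
    (hμ : ∀ x ∈ s, 1 ≤ ∑ y ∈ s, K x y * μ y) : ∑ x ∈ s, e x ≤ ∑ x ∈ s, μ x :=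
  calc ∑ x ∈ s, e x ≤ ∑ x ∈ s, e x * ∑ y ∈ s, K x y * μ y :=
        sum_le_sum fun x hx => le_mul_of_one_le_right (he x hx) (hμ x hx)
    _ = ∑ y ∈ s, μ y * ∑ x ∈ s, K y x * e x := by
        simp_rw [mul_sum]
        rw [sum_comm]
        refine sum_congr rfl fun y hy => sum_congr rfl fun x hx => ?_
        rw [hKsymm x hx y hy]
        ring
    _ = ∑ y ∈ s, μ y := sum_congr rfl fun y hy => by rw [hK y hy, mul_one]

end CapacityBounds

variable {g : ℕ → ℝ}

variable (g) in
def partialSum (n : ℕ) : ℝ := ∑ k ∈ range n, g (k + 1)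

theorem partialSum_nonneg (hg : ∀ k, 0 ≤ g k) (n : ℕ) : 0 ≤ partialSum g n :=
  sum_nonneg fun _ _ => hg _

theorem partialSum_mono (hg : ∀ k, 0 ≤ g k) : Monotone (partialSum g) := fun _ _ h =>
  sum_le_sum_of_subset_of_nonneg (range_subset_range.2 h) fun _ _ _ => hg _

theorem sum_Icc_dist {a b i : ℕ} (hai : a ≤ i) (hib : i ≤ b) :
    ∑ j ∈ Icc a b, g (Nat.dist i j) = g 0 + partialSum g (i - a) + partialSum g (b - i) := by
  have left : ∑ j ∈ Ico a (i + 1), g (Nat.dist i j) = g 0 + partialSum g (i - a) :=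
    calc ∑ j ∈ Ico a (i + 1), g (Nat.dist i j)
        = ∑ k ∈ range (i - a + 1), g (i - a + 1 - 1 - k) := by
          rw [sum_Ico_eq_sum_range, show i + 1 - a = i - a + 1 by omega]
          refine sum_congr rfl fun k hk => ?_
          rw [mem_range] at hk
          simp only [Nat.dist]
          congr 1
          omega
      _ = g 0 + partialSum g (i - a) := by
          rw [sum_range_reflect (fun k => g k), sum_range_succ', add_comm, partialSum]
  have right : ∑ j ∈ Ico (i + 1) (b + 1), g (Nat.dist i j) = partialSum g (b - i) := by
    rw [sum_Ico_eq_sum_range, show b + 1 - (i + 1) = b - i by omega]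
    refine sum_congr rfl fun k _ => ?_
    simp only [Nat.dist]
    congr 1
    omega
  rw [← Ico_add_one_right_eq_Icc,
    ← sum_Ico_consecutive _ (show a ≤ i + 1 by omega) (show i + 1 ≤ b + 1 by omega), left, right]

theorem partialSum_half_le_sum_Icc_dist (hg : ∀ k, 0 ≤ g k) {a b i : ℕ} (hai : a ≤ i)
    (hib : i ≤ b) : partialSum g ((b - a) / 2) ≤ ∑ j ∈ Icc a b, g (Nat.dist i j) := by
  rw [sum_Icc_dist hai hib]
  have := hg 0
  have := partialSum_nonneg hg (i - a)
  have := partialSum_nonneg hg (b - i)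
  rcases le_total ((b - a) / 2) (i - a) with h | h
  · linarith [partialSum_mono hg h]
  · linarith [partialSum_mono hg (show (b - a) / 2 ≤ b - i by omega)]

def testWeight (N L j : ℕ) : ℝ :=
  1 + (if j ∈ Icc 0 L then 1 else 0) + (if j ∈ Icc (N - L) N then 1 else 0)

theorem sum_testWeight {N L : ℕ} (hLN : L ≤ N) :
    ∑ j ∈ Icc 0 N, testWeight N L j = N + 2 * L + 3 := by
  simp only [testWeight, sum_add_distrib, sum_ite_mem,
    inter_eq_right.2 (Icc_subset_Icc le_rfl hLN),
    inter_eq_right.2 (Icc_subset_Icc (Nat.zero_le _) le_rfl)]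
  simp only [sum_const, Nat.card_Icc, nsmul_eq_mul, mul_one, show N + 1 - (N - L) = L + 1 by omega]
  push_cast
  ring

theorem two_mul_partialSum_le_sum_dist_mul_testWeight (hg : ∀ k, 0 ≤ g k) {N L i : ℕ}
    (hLN : 2 * L ≤ N) (hiN : i ≤ N) :
    2 * partialSum g (L / 2) ≤ ∑ j ∈ Icc 0 N, g (Nat.dist i j) * testWeight N L j := by
  have split : ∑ j ∈ Icc 0 N, g (Nat.dist i j) * testWeight N L j =
      ∑ j ∈ Icc 0 N, g (Nat.dist i j) + ∑ j ∈ Icc 0 L, g (Nat.dist i j) +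
        ∑ j ∈ Icc (N - L) N, g (Nat.dist i j) := by
    simp only [testWeight, mul_add, mul_one, mul_ite, mul_zero, sum_add_distrib, sum_ite_mem,
      inter_eq_right.2 (Icc_subset_Icc le_rfl (by omega : L ≤ N)),
      inter_eq_right.2 (Icc_subset_Icc (Nat.zero_le (N - L)) le_rfl)]
  have nonneg (a b : ℕ) : 0 ≤ ∑ j ∈ Icc a b, g (Nat.dist i j) := sum_nonneg fun _ _ => hg _
  have whole := sum_Icc_dist (g := g) (Nat.zero_le i) hiN
  rw [Nat.sub_zero] at whole
  have mono := partialSum_mono hg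
  rw [split, whole]
  have := hg 0
  rcases le_or_gt i L with hiL | hLi
  · have := partialSum_half_le_sum_Icc_dist hg (Nat.zero_le i) hiL
    rw [Nat.sub_zero] at this
    have := mono (show L / 2 ≤ N - i by omega)
    linarith [partialSum_nonneg hg i, nonneg (N - L) N]
  rcases le_or_gt (N - L) i with hiR | hiR
  · have := partialSum_half_le_sum_Icc_dist hg hiR hiN
    rw [show N - (N - L) = L by omega] at this
    have := mono (show L / 2 ≤ i by omega)
    linarith [partialSum_nonneg hg (N - i), nonneg 0 L]
  · have := mono (show L / 2 ≤ i by omega)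
    have := mono (show L / 2 ≤ N - i by omega)
    linarith [nonneg 0 L, nonneg (N - L) N]

section SegmentBounds

variable {N : ℕ} {e : ℕ → ℝ}

theorem natCast_add_one_le_sum_mul (hg : ∀ k, 0 ≤ g k) (he : ∀ j ∈ Icc 0 N, 0 ≤ e j)
    (hK : ∀ i ∈ Icc 0 N, ∑ j ∈ Icc 0 N, g (Nat.dist i j) * e j = 1) :
    (N + 1 : ℝ) ≤ (∑ j ∈ Icc 0 N, e j) * (g 0 + 2 * partialSum g N) := by
  have rowSum_le (j : ℕ) (hj : j ∈ Icc 0 N) :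
      ∑ i ∈ Icc 0 N, g (Nat.dist i j) ≤ g 0 + 2 * partialSum g N := by
    rw [mem_Icc] at hj
    simp_rw [Nat.dist_comm _ j]
    rw [sum_Icc_dist hj.1 hj.2]
    linarith [partialSum_mono hg (show j - 0 ≤ N by omega), partialSum_mono hg (Nat.sub_le N j)]
  simpa using card_le_sum_mul_of_sum_kernel_le he hK rowSum_le

theorem sum_le_div_two_mul_partialSum (hg : ∀ k, 0 ≤ g k) {L : ℕ} (hLN : 2 * L ≤ N)
    (hS : 0 < partialSum g (L / 2)) (he : ∀ j ∈ Icc 0 N, 0 ≤ e j)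
    (hK : ∀ i ∈ Icc 0 N, ∑ j ∈ Icc 0 N, g (Nat.dist i j) * e j = 1) :
    ∑ j ∈ Icc 0 N, e j ≤ (N + 2 * L + 3) / (2 * partialSum g (L / 2)) := by
  calc ∑ j ∈ Icc 0 N, e j ≤ ∑ j ∈ Icc 0 N, testWeight N L j / (2 * partialSum g (L / 2)) := by
        refine sum_le_sum_of_one_le_potential (fun i _ j _ => by rw [Nat.dist_comm]) he hK
          fun i hi => ?_
        simp_rw [← mul_div_assoc]
        rw [← sum_div, one_le_div (by positivity)]
        exact two_mul_partialSum_le_sum_dist_mul_testWeight hg hLN (mem_Icc.1 hi).2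
    _ = (N + 2 * L + 3) / (2 * partialSum g (L / 2)) := by
        rw [← sum_div, sum_testWeight (by omega)]

end SegmentBounds

theorem tendsto_log_natCast_atTop : Tendsto (fun n : ℕ => Real.log n) atTop atTop :=
  Real.tendsto_log_atTop.comp tendsto_natCast_atTop_atTop

theorem tendsto_harmonic_div_log :
    Tendsto (fun n : ℕ => (harmonic n : ℝ) / Real.log n) atTop (𝓝 1) := by
  have := (Real.tendsto_harmonic_sub_log.div_atTop tendsto_log_natCast_atTop).const_add 1
  rw [add_zero] at this
  refine this.congr' ?_
  filter_upwards [tendsto_log_natCast_atTop.eventually_gt_atTop 0] with n hn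
  field_simp
  ring

variable {c : ℝ}

theorem tendsto_partialSum_div_harmonic (hg : Tendsto (fun k : ℕ => k * g k) atTop (𝓝 c)) :
    Tendsto (fun n => partialSum g n / harmonic n) atTop (𝓝 c) := by
  set h : ℕ → ℝ := fun i => ((i : ℝ) + 1)⁻¹
  have sum_h (n : ℕ) : ∑ i ∈ range n, h i = harmonic n := by simp [h, harmonic]
  have h_top : Tendsto (fun n => ∑ i ∈ range n, h i) atTop atTop := by
    simp_rw [sum_h]
    refine (Real.tendsto_harmonic_sub_log.add_atTop tendsto_log_natCast_atTop).congr fun n => ?_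
    ring
  have hτ : Tendsto (fun i : ℕ => ((i : ℝ) + 1) * g (i + 1) - c) atTop (𝓝 0) := by
    simpa using (hg.comp (tendsto_add_atTop_nat 1)).sub_const c
  have small : (fun i => g (i + 1) - c * h i) =o[atTop] h := by
    have := (Asymptotics.isBigO_refl h atTop).mul_isLittleO ((Asymptotics.isLittleO_one_iff ℝ).2 hτ)
    simp only [mul_one] at this
    refine this.congr_left fun i => ?_
    simp only [h]
    field_simp
  have := ((small.sum_range (fun i => by positivity) h_top).tendsto_div_nhds_zero).const_add c
  rw [add_zero] at this
  refine this.congr' ?_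
  filter_upwards [eventually_gt_atTop 0] with n hn
  have : (0 : ℝ) < harmonic n := by exact_mod_cast harmonic_pos hn.ne'
  rw [sum_sub_distrib, ← mul_sum, sum_h, partialSum]
  field_simp
  ring

theorem tendsto_partialSum_div_log (hg : Tendsto (fun k : ℕ => k * g k) atTop (𝓝 c)) :
    Tendsto (fun n => partialSum g n / Real.log n) atTop (𝓝 c) := by
  have := (tendsto_partialSum_div_harmonic hg).mul tendsto_harmonic_div_log
  rw [mul_one] at this
  refine this.congr' ?_
  filter_upwards [eventually_gt_atTop 0] with n hn
  have : (0 : ℝ) < harmonic n := by exact_mod_cast harmonic_pos hn.ne'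
  rw [div_mul_div_cancel₀ this.ne']

theorem tendsto_log_div_div_log {j : ℕ} (hj : 0 < j) :
    Tendsto (fun N : ℕ => Real.log (N / j : ℕ) / Real.log N) atTop (𝓝 1) := by
  have lower : Tendsto (fun N : ℕ => 1 - Real.log (2 * j) / Real.log N) atTop (𝓝 1) := by
    simpa using (tendsto_const_nhds.div_atTop tendsto_log_natCast_atTop).const_sub 1
  refine tendsto_of_tendsto_of_tendsto_of_le_of_le' lower tendsto_const_nhds ?_ ?_
  all_goals filter_upwards [eventually_ge_atTop (2 * j), eventually_ge_atTop 2] with N hNj hN2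
  all_goals
    have hlog : 0 < Real.log N := Real.log_pos (by exact_mod_cast hN2)
    have hq : (0 : ℝ) < (N / j : ℕ) := by exact_mod_cast Nat.div_pos (by omega) hj
  · rw [one_sub_div hlog.ne', div_le_div_iff_of_pos_right hlog,
      ← Real.log_div (by positivity) (by positivity)]
    refine Real.log_le_log (by positivity) ?_
    rw [div_le_iff₀ (by positivity)]
    have := Nat.lt_div_mul_add (a := N) hj
    have : 1 ≤ N / j := Nat.div_pos (by omega) hj
    have : (N : ℝ) ≤ 2 * j * (N / j : ℕ) := by exact_mod_cast (by nlinarith)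
    linarith
  · rw [div_le_one hlog]
    exact Real.log_le_log hq (by exact_mod_cast Nat.div_le_self N j)

theorem tendsto_partialSum_div_div_log (hg : Tendsto (fun k : ℕ => k * g k) atTop (𝓝 c))
    {j : ℕ} (hj : 0 < j) :
    Tendsto (fun N : ℕ => partialSum g (N / j) / Real.log N) atTop (𝓝 c) := by
  have := ((tendsto_partialSum_div_log hg).comp (Nat.tendsto_div_const_atTop hj.ne')).mul
    (tendsto_log_div_div_log hj)
  rw [mul_one] at this
  refine this.congr' ?_
  filter_upwards [eventually_ge_atTop (2 * j)] with N hN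
  have : (1 : ℝ) < (N / j : ℕ) := by
    exact_mod_cast (Nat.le_div_iff_mul_le hj).2 (by linarith)
  rw [Function.comp_apply, div_mul_div_cancel₀ (Real.log_pos this).ne']

theorem eventually_partialSum_div_pos (hc : 0 < c)
    (hg : Tendsto (fun k : ℕ => k * g k) atTop (𝓝 c)) {j : ℕ} (hj : 0 < j) :
    ∀ᶠ N : ℕ in atTop, 0 < partialSum g (N / j) := by
  filter_upwards [(tendsto_partialSum_div_div_log hg hj).eventually (lt_mem_nhds hc),
    tendsto_log_natCast_atTop.eventually_gt_atTop 0] with N h hlog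
  exact (div_pos_iff_of_pos_right hlog).1 h

theorem tendsto_log_div_add_two_mul_partialSum (hc : 0 < c)
    (hg : Tendsto (fun k : ℕ => k * g k) atTop (𝓝 c)) (a : ℝ) {j : ℕ} (hj : 0 < j) :
    Tendsto (fun N : ℕ => Real.log N / (a + 2 * partialSum g (N / j))) atTop (𝓝 (1 / (2 * c))) := by
  have := ((tendsto_const_nhds (x := a)).div_atTop tendsto_log_natCast_atTop).add
    ((tendsto_partialSum_div_div_log hg hj).const_mul 2) |>.inv₀ (by positivity)
  rw [zero_add, ← one_div] at this
  refine this.congr' ?_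
  filter_upwards [tendsto_log_natCast_atTop.eventually_gt_atTop 0] with N hlog
  field_simp

variable {e : ℕ → ℕ → ℝ}

theorem eventually_log_div_le_sum_mul_log_div (hg0 : ∀ k, 0 ≤ g k) (hc : 0 < c)
    (hg : Tendsto (fun k : ℕ => k * g k) atTop (𝓝 c)) (he : ∀ N, ∀ j ∈ Icc 0 N, 0 ≤ e N j)
    (hK : ∀ N, ∀ i ∈ Icc 0 N, ∑ j ∈ Icc 0 N, g (Nat.dist i j) * e N j = 1) :
    ∀ᶠ N : ℕ in atTop, Real.log N / (g 0 + 2 * partialSum g N) ≤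
      (∑ j ∈ Icc 0 N, e N j) * Real.log N / N := by
  filter_upwards [eventually_partialSum_div_pos hc hg one_pos, eventually_gt_atTop 0]
    with N hS hN
  rw [Nat.div_one] at hS
  have hlog : 0 ≤ Real.log N := Real.log_natCast_nonneg N
  rw [div_le_div_iff₀ (by linarith [hg0 0]) (by positivity)]
  calc Real.log N * N ≤ Real.log N * (N + 1) := by nlinarith
    _ ≤ Real.log N * ((∑ j ∈ Icc 0 N, e N j) * (g 0 + 2 * partialSum g N)) :=
        mul_le_mul_of_nonneg_left (natCast_add_one_le_sum_mul hg0 (he N) (hK N)) hlog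
    _ = (∑ j ∈ Icc 0 N, e N j) * Real.log N * (g 0 + 2 * partialSum g N) := by ring

theorem eventually_sum_mul_log_div_le (hg0 : ∀ k, 0 ≤ g k) (hc : 0 < c)
    (hg : Tendsto (fun k : ℕ => k * g k) atTop (𝓝 c)) (he : ∀ N, ∀ j ∈ Icc 0 N, 0 ≤ e N j)
    (hK : ∀ N, ∀ i ∈ Icc 0 N, ∑ j ∈ Icc 0 N, g (Nat.dist i j) * e N j = 1) {k : ℕ}
    (hk : 0 < k) :
    ∀ᶠ N : ℕ in atTop, (∑ j ∈ Icc 0 N, e N j) * Real.log N / N ≤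
      (1 + 1 / k + 3 / N) * (Real.log N / (2 * partialSum g (N / (4 * k)))) := by
  filter_upwards [eventually_partialSum_div_pos hc hg (by omega : 0 < 4 * k),
    eventually_gt_atTop 0] with N hS hN
  set L := N / (2 * k)
  have hLN : 2 * L ≤ N := (Nat.mul_le_mul_right L (by omega)).trans (Nat.mul_div_le N (2 * k))
  have hL2 : L / 2 = N / (4 * k) := by rw [Nat.div_div_eq_div_mul]; ring_nf
  have hLk : (2 * L : ℝ) / N ≤ 1 / k := by
    have : (L : ℝ) ≤ N / (2 * k : ℕ) := Nat.cast_div_le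
    push_cast at this
    rw [div_le_div_iff₀ (by positivity) (by positivity)]
    rw [le_div_iff₀ (by positivity)] at this
    linarith
  have hcap := sum_le_div_two_mul_partialSum hg0 hLN (hL2 ▸ hS) (he N) (hK N)
  rw [hL2] at hcap
  have hlog : 0 ≤ Real.log N := Real.log_natCast_nonneg N
  calc (∑ j ∈ Icc 0 N, e N j) * Real.log N / N
      ≤ (N + 2 * L + 3) / (2 * partialSum g (N / (4 * k))) * Real.log N / N := by gcongr
    _ = (1 + 2 * L / N + 3 / N) * (Real.log N / (2 * partialSum g (N / (4 * k)))) := by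
        field_simp
    _ ≤ (1 + 1 / k + 3 / N) * (Real.log N / (2 * partialSum g (N / (4 * k)))) :=
        mul_le_mul_of_nonneg_right (by linarith) (by positivity)

theorem tendsto_sum_mul_log_div (hg0 : ∀ k, 0 ≤ g k) (hc : 0 < c)
    (hg : Tendsto (fun k : ℕ => k * g k) atTop (𝓝 c)) (he : ∀ N, ∀ j ∈ Icc 0 N, 0 ≤ e N j)
    (hK : ∀ N, ∀ i ∈ Icc 0 N, ∑ j ∈ Icc 0 N, g (Nat.dist i j) * e N j = 1) :
    Tendsto (fun N : ℕ => (∑ j ∈ Icc 0 N, e N j) * Real.log N / N) atTop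
      (𝓝 (1 / (2 * c))) := by
  refine tendsto_of_forall_eventually_le (p := atTop)
    (by simpa using tendsto_log_div_add_two_mul_partialSum hc hg (g 0) one_pos)
    (eventually_log_div_le_sum_mul_log_div hg0 hc hg he hK)
    (y := fun k : ℕ => (1 + 1 / k + 0) * (1 / (2 * c))) ?_ ?_
    (eventually_gt_atTop 0 |>.mono fun k hk => eventually_sum_mul_log_div_le hg0 hc hg he hK hk)
  · simpa using (((tendsto_const_div_atTop_nhds_zero_nat 1).const_add 1).add_const 0).mul_const
      (1 / (2 * c))
  · filter_upwards [eventually_gt_atTop 0] with k hk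
    exact (tendsto_const_nhds.add (tendsto_const_div_atTop_nhds_zero_nat 3)).mul
      (by simpa using tendsto_log_div_add_two_mul_partialSum hc hg 0 (by omega : 0 < 4 * k))

end SegmentCapacity

def axisPoint (m : ℤ) : Zd 3 := fun j => if (j : ℕ) = 0 then m else 0

theorem axisPoint_sub (a b : ℤ) : axisPoint a - axisPoint b = axisPoint (a - b) := by
  funext j
  by_cases h : (j : ℕ) = 0 <;> simp [axisPoint, h]

theorem axisPoint_neg (m : ℤ) : axisPoint (-m) = -axisPoint m := by
  funext j
  by_cases h : (j : ℕ) = 0 <;> simp [axisPoint, h]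

theorem axisPoint_injective : Function.Injective axisPoint := fun a b h => by
  simpa [axisPoint] using congrFun h 0

theorem enorm3_axisPoint (m : ℤ) : enorm3 (axisPoint m) = |(m : ℝ)| := by
  simp [enorm3, axisPoint, Real.sqrt_sq_eq_abs]

theorem sum_segN (N : ℕ) (φ : Zd 3 → ℝ) :
    ∑ x ∈ segN N, φ x = ∑ i ∈ Icc 0 N, φ (axisPoint i) := by
  rw [segN, sum_image fun a _ b _ h => by exact_mod_cast axisPoint_injective h,
    Nat.range_succ_eq_Icc_zero]
  rfl

theorem axisPoint_mem_segN {N i : ℕ} (hi : i ∈ Icc 0 N) : axisPoint i ∈ segN N :=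
  mem_image_of_mem _ (by simpa [Nat.lt_succ_iff] using hi)

theorem apply_axisPoint_sub {G : Zd 3 → ℝ} (hG : ∀ x, G (-x) = G x) (i j : ℕ) :
    G (axisPoint i - axisPoint j) = G (axisPoint (Nat.dist i j)) := by
  rw [axisPoint_sub]
  rcases le_total i j with h | h
  · rw [Nat.dist_eq_sub_of_le h, ← hG, ← axisPoint_neg]
    push_cast [h]
    ring_nf
  · rw [Nat.dist_eq_sub_of_le_right h]
    push_cast [h]
    rfl

theorem tendsto_natCast_mul_apply_axisPoint {G : Zd 3 → ℝ} {c : ℝ}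
    (hG : ∀ ε : ℝ, 0 < ε → ∃ R : ℝ, ∀ x : Zd 3, R ≤ enorm3 x → |G x * enorm3 x - c| ≤ ε) :
    Tendsto (fun k : ℕ => (k : ℝ) * G (axisPoint k)) atTop (𝓝 c) := by
  rw [Metric.tendsto_atTop]
  intro ε hε
  obtain ⟨R, hR⟩ := hG (ε / 2) (by positivity)
  refine ⟨⌈R⌉₊, fun k hk => ?_⟩
  have hnorm : enorm3 (axisPoint k) = k := by simp [enorm3_axisPoint]
  have := hR (axisPoint k) (hnorm ▸ (Nat.ceil_le.1 hk))
  rw [hnorm, mul_comm] at this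
  rw [Real.dist_eq]
  linarith

theorem stmt2_general (G : Zd 3 → ℝ) (hG0 : ∀ x, 0 ≤ G x) (hGsym : ∀ x, G (-x) = G x)
    (hGasym : ∀ ε : ℝ, 0 < ε → ∃ R : ℝ, ∀ x : Zd 3, R ≤ enorm3 x →
      |G x * enorm3 x - 3 / (2 * Real.pi)| ≤ ε)
    (e : ℕ → Zd 3 → ℝ) (he0 : ∀ N x, 0 ≤ e N x)
    (hlast : ∀ N, ∀ x ∈ segN N, ∑ y ∈ segN N, G (x - y) * e N y = 1) :
    Filter.Tendsto (fun N : ℕ => (∑ x ∈ segN N, e N x) * Real.log N / N)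
      Filter.atTop (nhds (Real.pi / 3)) := by
  have hlast_line (N i : ℕ) (hi : i ∈ Icc 0 N) :
      ∑ j ∈ Icc 0 N, G (axisPoint (Nat.dist i j)) * e N (axisPoint j) = 1 := by
    rw [← hlast N _ (axisPoint_mem_segN hi), sum_segN]
    simp_rw [apply_axisPoint_sub hGsym]
  have key := SegmentCapacity.tendsto_sum_mul_log_div (fun k => hG0 _) (by positivity)
    (tendsto_natCast_mul_apply_axisPoint hGasym) (fun N j _ => he0 N _) hlast_line
  rw [show Real.pi / 3 = 1 / (2 * (3 / (2 * Real.pi))) by field_simp]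
  simpa only [sum_segN] using key

theorem stmt2 (G : Zd 3 → ℝ) (hG0 : ∀ x, 0 ≤ G x) (hGsym : ∀ x, G (-x) = G x)
    (CG : ℝ) (hGbd : ∀ x, G x ≤ CG)
    (hGasym : ∀ ε : ℝ, 0 < ε → ∃ R : ℝ, ∀ x : Zd 3, R ≤ enorm3 x →
      |G x * enorm3 x - 3 / (2 * Real.pi)| ≤ ε)
    (e : ℕ → Zd 3 → ℝ) (he0 : ∀ N x, 0 ≤ e N x) (he1 : ∀ N x, e N x ≤ 1)
    (hes : ∀ N x, x ∉ segN N → e N x = 0)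
    (hlast : ∀ N, ∀ x ∈ segN N, ∑ y ∈ segN N, G (x - y) * e N y = 1) :
    Filter.Tendsto (fun N : ℕ => (∑ x ∈ segN N, e N x) * Real.log N / N)
      Filter.atTop (nhds (Real.pi / 3)) :=
  stmt2_general G hG0 hGsym hGasym e he0 hlast
end

section
/- Suppose a family of events (A_L)_{L} on R^{Z^d} with each A_L an increasing Borel event depending on coordinates in D_z (a box of side 7L) satisfies P[A_L^{h'}(φ)] ≤ e^{-2f(L)} with log 2 ≤ f(L) ≤ c(ε)L. Then P[A_L^{h'+ε/4}(ψ^z)] ≤ e^{-f(L)}, where φ = ξ^z + ψ^z is the decomposition of the GFF into harmonic average and local field on U_z, and the constant c(ε) comes from the Gaussian bound P[inf_{D_z} ξ^z ≤ -ε/4] ≤ e^{-2c(ε)L}. -/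
/-!
STATEMENT 16: Let `φ = ξ + ψ` be the decomposition of the GFF into the harmonic average
`ξ = ξ^z` on `U_z` and the local field `ψ = ψ^z = φ - ξ^z`, and let `A` be an increasing
Borel event depending only on the coordinates in the box `D_z = z + [-3L, 4L)^d`. If
`P[A^{h'}(φ)] ≤ e^{-2 f(L)}` with `log 2 ≤ f(L) ≤ c(ε) L`, where `c(ε)` is such that the
Gaussian bound `P[inf_{D_z} ξ^z ≤ -ε/4] ≤ e^{-2 c(ε) L}` holds, then
`P[A^{h' + ε/4}(ψ^z)] ≤ e^{-f(L)}`. (Here `A^h(φ) = {φ|_{D_z} - h ∈ A}`.)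
-/

open MeasureTheory
open scoped BigOperators

theorem stmt16 (d L : ℕ) (hL : 1 ≤ L) {Ω : Type*} [MeasurableSpace Ω]
    (μ : Measure Ω) [IsProbabilityMeasure μ]
    (φ ξ : Zd d → Ω → ℝ) (z : Zd d)
    (Dz : Finset (Zd d))
    (hDz : Dz = Finset.Icc (fun i => z i - 3 * (L : ℤ)) (fun i => z i + 4 * (L : ℤ) - 1))
    (A : Set (Zd d → ℝ))
    (hAinc : ∀ f g : Zd d → ℝ, (∀ x, f x ≤ g x) → f ∈ A → g ∈ A)
    (hAdep : ∀ f g : Zd d → ℝ, (∀ x ∈ Dz, f x = g x) → (f ∈ A ↔ g ∈ A))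
    (h' ε cε fL : ℝ) (hε : 0 < ε)
    (hf1 : Real.log 2 ≤ fL) (hf2 : fL ≤ cε * L)
    (hApriori : μ {ω | (fun x => φ x ω - h') ∈ A} ≤ ENNReal.ofReal (Real.exp (-(2 * fL))))
    (hGaussTail :
      μ {ω | ∃ x ∈ Dz, ξ x ω ≤ -(ε / 4)} ≤ ENNReal.ofReal (Real.exp (-(2 * cε * L)))) :
    μ {ω | (fun x => (φ x ω - ξ x ω) - (h' + ε / 4)) ∈ A} ≤
      ENNReal.ofReal (Real.exp (-fL)) := by
  have hsub : {ω | (fun x => (φ x ω - ξ x ω) - (h' + ε / 4)) ∈ A} ⊆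
      {ω | (fun x => φ x ω - h') ∈ A} ∪ {ω | ∃ x ∈ Dz, ξ x ω ≤ -(ε / 4)} := by
    intro ω hω
    by_cases h2 : ∃ x ∈ Dz, ξ x ω ≤ -(ε / 4)
    · exact Or.inr h2
    · left
      push_neg at h2
      have hg : (fun x => max (φ x ω - h') ((φ x ω - ξ x ω) - (h' + ε / 4))) ∈ A :=
        hAinc _ _ (fun x => le_max_right _ _) hω
      refine (hAdep _ _ ?_).mpr hg
      intro x hx
      have := h2 x hx
      have : (φ x ω - ξ x ω) - (h' + ε / 4) ≤ φ x ω - h' := by linarith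
      simp [max_eq_left this]
  have key : Real.exp (-(2 * fL)) + Real.exp (-(2 * cε * L)) ≤ Real.exp (-fL) := by
    have h1 : Real.exp (-(2 * cε * L)) ≤ Real.exp (-(2 * fL)) := by
      apply Real.exp_le_exp.mpr; nlinarith
    have h2 : Real.exp (-fL) ≤ 1 / 2 := by
      rw [show (1:ℝ)/2 = Real.exp (-Real.log 2) by
        rw [Real.exp_neg, Real.exp_log two_pos]; norm_num]
      exact Real.exp_le_exp.mpr (by linarith)
    have h3 : Real.exp (-(2 * fL)) = Real.exp (-fL) * Real.exp (-fL) := by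
      rw [← Real.exp_add]; ring_nf
    nlinarith [Real.exp_pos (-fL)]
  calc μ {ω | (fun x => (φ x ω - ξ x ω) - (h' + ε / 4)) ∈ A}
      ≤ μ ({ω | (fun x => φ x ω - h') ∈ A} ∪ {ω | ∃ x ∈ Dz, ξ x ω ≤ -(ε / 4)}) :=
        measure_mono hsub
    _ ≤ μ {ω | (fun x => φ x ω - h') ∈ A} + μ {ω | ∃ x ∈ Dz, ξ x ω ≤ -(ε / 4)} :=
        measure_union_le _ _
    _ ≤ ENNReal.ofReal (Real.exp (-(2 * fL))) + ENNReal.ofReal (Real.exp (-(2 * cε * L))) :=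
        add_le_add hApriori hGaussTail
    _ = ENNReal.ofReal (Real.exp (-(2 * fL)) + Real.exp (-(2 * cε * L))) :=
        (ENNReal.ofReal_add (Real.exp_pos _).le (Real.exp_pos _).le).symm
    _ ≤ ENNReal.ofReal (Real.exp (-fL)) := ENNReal.ofReal_le_ofReal key
end
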